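/- arXiv:1402.4681 — 2 statements merged into one kernel-verified Lean document; each statement's English description precedes it below -/
import Mathlib

section
/- Let a be a regular finite-dimensional algebraic Lie algebra over k admitting an adapted pair (h, η), V an ad h stable complement to (ad a)η in a*, and ψ : S(a_Z) → k[η+V] the restriction of polynomial functions on a_Z* to the linear subvariety η + V. Then for every nonzero semi-invariant q ∈ Sy(a_Z) one has ψ(q) ≠ 0; consequently ψ restricts to an injective algebra homomorphism from Y(a_Z) into k[η+V]. -/
open Module

section Core

variable (k : Type*) [Field k] [IsAlgClosed k] [CharZero k]
variable (L : Type*) [LieRing L] [LieAlgebra k L] [Module.Finite k L]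

/-- The stabiliser `a^ξ` of `ξ ∈ a*` under the coadjoint action of `a`. -/
def coadStab (ξ : Module.Dual k L) : Submodule k L where
  carrier := {x : L | ∀ y : L, ξ ⁅x, y⁆ = 0}
  add_mem' := fun {a b} ha hb y => by rw [add_lie, map_add, ha y, hb y, add_zero]
  zero_mem' := fun y => by rw [zero_lie, map_zero]
  smul_mem' := fun c a ha y => by rw [smul_lie, map_smul, ha y, smul_zero]

/-- The index `ℓ(a)` of a Lie algebra: the minimal dimension of a coadjoint stabiliser. -/
noncomputable def lieIndex : ℕ := ⨅ ξ : Module.Dual k L, finrank k (coadStab k L ξ)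

/-- `ξ ∈ a*` is regular if its stabiliser has dimension equal to the index. -/
def IsRegularCovector (ξ : Module.Dual k L) : Prop :=
  finrank k (coadStab k L ξ) = lieIndex k L

/-- An adapted pair `(h, η)`: `ad h` is a semisimple (diagonalisable) endomorphism, `η` is a
regular element of `a*`, and `(ad h)η = -η`, i.e. `η ∘ ad h = η`. -/
structure IsAdaptedPair (h : L) (η : Module.Dual k L) : Prop where
  semisimple : ⨆ μ : k, (LieAlgebra.ad k L h).eigenspace μ = ⊤
  regular : IsRegularCovector k L η
  eigen : ∀ y : L, η ⁅h, y⁆ = η y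

/-- `a_ℤ`, the sum of the integer eigenspaces of `ad h`. -/
noncomputable def intPart (h : L) : Submodule k L :=
  ⨆ n : ℤ, (LieAlgebra.ad k L h).eigenspace (n : k)

/-- `c`, the span of the `ad h` eigenvectors with eigenvalues in `k ∖ ℤ`. -/
noncomputable def nonIntPart (h : L) : Submodule k L :=
  ⨆ μ : {μ : k // ∀ n : ℤ, μ ≠ (n : k)}, (LieAlgebra.ad k L h).eigenspace (μ : k)

/-- The stabiliser of (the restriction of) `ξ` relative to the subalgebra with
underlying submodule `A`:  `{x ∈ A | ξ⁅x, A⁆ = 0}`. -/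
def relStab (A : Submodule k L) (ξ : Module.Dual k L) : Submodule k L where
  carrier := {x : L | x ∈ A ∧ ∀ y ∈ A, ξ ⁅x, y⁆ = 0}
  add_mem' := fun {a b} ha hb =>
    ⟨A.add_mem ha.1 hb.1, fun y hy => by rw [add_lie, map_add, ha.2 y hy, hb.2 y hy, add_zero]⟩
  zero_mem' := ⟨A.zero_mem, fun y _ => by rw [zero_lie, map_zero]⟩
  smul_mem' := fun c a ha =>
    ⟨A.smul_mem c ha.1, fun y hy => by rw [smul_lie, map_smul, ha.2 y hy, smul_zero]⟩

/-- The index of the Lie subalgebra with underlying submodule `A` (every functional on `A`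
extends to `L`, so it suffices to range over `L*`). -/
noncomputable def relIndex (A : Submodule k L) : ℕ :=
  ⨅ ξ : Module.Dual k L, finrank k (relStab k L A ξ)

/-- Regularity of (the restriction to `A` of) `ξ` for the subalgebra `A`. -/
def IsRelRegular (A : Submodule k L) (ξ : Module.Dual k L) : Prop :=
  finrank k (relStab k L A ξ) = relIndex k L A

/-- The linear map `x ↦ (ad x)η = -η ∘ ad x` (coadjoint action applied to `η`). -/
noncomputable def coadMap (η : Module.Dual k L) : L →ₗ[k] Module.Dual k L where
  toFun x := -(η ∘ₗ (LieAlgebra.ad k L x))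
  map_add' x y := by ext z; simp [add_lie]; ring
  map_smul' c x := by ext z; simp [smul_lie]

/-- `(ad a)η`, the tangent space at `η` of the coadjoint orbit of `η`. -/
noncomputable def coadOrbit (η : Module.Dual k L) : Submodule k (Module.Dual k L) :=
  LinearMap.range (coadMap k L η)

/-- The coadjoint action of `h` on `a*`, as an endomorphism of `a*`. -/
noncomputable def coadEnd (h : L) : Module.End k (Module.Dual k L) :=
  -((LieAlgebra.ad k L h).dualMap)

/-- The truncated exponential of `ad x`; this equals `exp (ad x)` whenever `ad x` is
nilpotent (its nilpotency index is at most `dim L`). -/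
noncomputable def expAd (x : L) : Module.End k L :=
  ∑ i ∈ Finset.range (finrank k L + 1), (i.factorial : k)⁻¹ • (LieAlgebra.ad k L x) ^ i

end Core

section Sym

variable {k : Type*} [Field k] [IsAlgClosed k] [CharZero k]
variable {M : Type*} [LieRing M] [LieAlgebra k M]

/-- The action of `x ∈ M` on the symmetric algebra `S(M)`, realised as the polynomial algebra
on the coordinates of the basis `b`, by the unique derivation extending `ad x`. -/
noncomputable def lieDer {n : ℕ} (b : Basis (Fin n) k M) (x : M) :
    Derivation k (MvPolynomial (Fin n) k) (MvPolynomial (Fin n) k) :=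
  MvPolynomial.mkDerivation k fun i => ∑ j, b.repr ⁅x, b i⁆ j • MvPolynomial.X j

/-- A character of a Lie algebra: a linear functional vanishing on brackets. -/
def IsLieChar (lam : Module.Dual k M) : Prop := ∀ x y : M, lam ⁅x, y⁆ = 0

/-- `p` is a semi-invariant of `S(M)` of weight the character `lam`. -/
def IsSemiInvariantWt {n : ℕ} (b : Basis (Fin n) k M) (p : MvPolynomial (Fin n) k)
    (lam : Module.Dual k M) : Prop :=
  p ≠ 0 ∧ IsLieChar lam ∧ ∀ x : M, lieDer b x p = lam x • p

/-- `p` is a semi-invariant of `S(M)`. -/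
def IsSemiInvariant {n : ℕ} (b : Basis (Fin n) k M) (p : MvPolynomial (Fin n) k) : Prop :=
  ∃ lam : Module.Dual k M, IsSemiInvariantWt b p lam

/-- `Y(M) = S(M)^M`, the subalgebra of invariants. -/
def lieInvariants {n : ℕ} (b : Basis (Fin n) k M) : Subalgebra k (MvPolynomial (Fin n) k) where
  carrier := {p | ∀ x : M, lieDer b x p = 0}
  mul_mem' := fun {p q} hp hq x => by
    rw [Derivation.leibniz, hp x, hq x, smul_zero, smul_zero, add_zero]
  add_mem' := fun {p q} hp hq x => by rw [map_add, hp x, hq x, add_zero]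
  algebraMap_mem' := fun r x => by simp

/-- The action on `S(d)`, for `d` an ideal of `M`, of an element `y ∈ M`, by the derivation
extending `ad y`. -/
noncomputable def lieDerOn (d : LieIdeal k M) {nd : ℕ} (bd : Basis (Fin nd) k d) (y : M) :
    Derivation k (MvPolynomial (Fin nd) k) (MvPolynomial (Fin nd) k) :=
  MvPolynomial.mkDerivation k fun i =>
    ∑ j, bd.repr ⟨⁅y, ((bd i : d) : M)⁆, d.lie_mem (bd i).2⟩ j • MvPolynomial.X j

end Sym

/-- A subalgebra `B` of a commutative `k`-algebra is a polynomial algebra over `k`: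
it is freely generated by finitely many algebraically independent elements. -/
def IsPolynomialAlgebra (k : Type*) {A : Type*} [CommRing k] [CommRing A] [Algebra k A]
    (B : Subalgebra k A) : Prop :=
  ∃ (n : ℕ) (g : Fin n → A), (∀ i, g i ∈ B) ∧ AlgebraicIndependent k g ∧
    Algebra.adjoin k (Set.range g) = B

section Reg

variable (k : Type*) [Field k] [IsAlgClosed k] [CharZero k]
variable (L : Type*) [LieRing L] [LieAlgebra k L] [Module.Finite k L]

/-- A Lie algebra is regular if it has no proper semi-invariants, i.e. `Sy(a) = Y(a)`,
and `Y(a)` is a polynomial algebra. -/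
def IsRegularLieAlgebra : Prop :=
  Submodule.span k {p | IsSemiInvariant (Module.finBasis k L) p} =
      Subalgebra.toSubmodule (lieInvariants (Module.finBasis k L)) ∧
    IsPolynomialAlgebra k (lieInvariants (Module.finBasis k L))

end Reg

section Struct

variable (k : Type*) [Field k]
variable (L : Type*) [LieRing L] [LieAlgebra k L]

/-- A Lie algebra is reductive if its radical coincides with its centre. -/
def IsReductiveLie : Prop := LieAlgebra.radical k L = LieAlgebra.center k L

/-- `m` is the nilradical of `L`: the largest nilpotent ideal. -/
def IsNilradicalOf (m : LieIdeal k L) : Prop :=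
  LieRing.IsNilpotent m ∧ ∀ I : LieIdeal k L, LieRing.IsNilpotent I → I ≤ m

/-- `H` is a Cartan subalgebra of the subalgebra `r`: contained in `r`, nilpotent and
self-normalising in `r`. -/
def IsCartanIn (H r : LieSubalgebra k L) : Prop :=
  H ≤ r ∧ LieRing.IsNilpotent H ∧ ∀ x ∈ r, (∀ y ∈ H, ⁅x, y⁆ ∈ H) → x ∈ H

/-- The weight space of `α ∈ H*` in `L`, for the adjoint action of the subalgebra `H`. -/
def hWeightSpace (H : LieSubalgebra k L) (α : Module.Dual k H) : Submodule k L where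
  carrier := {x : L | ∀ t : H, ⁅(t : L), x⁆ = α t • x}
  add_mem' := fun {a b} ha hb t => by rw [lie_add, ha t, hb t, smul_add]
  zero_mem' := fun t => by rw [lie_zero, smul_zero]
  smul_mem' := fun c a ha t => by rw [lie_smul, ha t, smul_comm]

/-- Restriction of a linear functional along an inclusion of Lie subalgebras. -/
noncomputable def restrictChar {k L} [Field k] [LieRing L] [LieAlgebra k L]
    {H K : LieSubalgebra k L} (hHK : H ≤ K) (lam : Module.Dual k K) : Module.Dual k H :=
  lam ∘ₗ (LieSubalgebra.inclusion hHK).toLinearMap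

/-- Evaluation of an element of `S(a_ℤ)` (in the coordinates of the basis `bz`) at the point
`ξ` of `a_ℤ*` obtained by restricting `ξ ∈ a*`; this realises the restriction map `ψ` of
functions to the linear subvariety `η + V`. -/
noncomputable def secEval {k L} [Field k] [LieRing L] [LieAlgebra k L]
    {aZ : LieSubalgebra k L} {nz : ℕ} (bz : Basis (Fin nz) k aZ)
    (ξ : Module.Dual k L) (p : MvPolynomial (Fin nz) k) : k :=
  MvPolynomial.eval (fun i => ξ (bz i)) p

end Struct

/-!
A semi-invariant `q ∈ S(a_ℤ)` of weight `λ` satisfies `(ad x) q = λ(x) q`, i.e. it is an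
eigenvector of every linear vector field `ξ ↦ (ad x) ξ` on `a_ℤ*`. At `η` these vector fields
point in the directions `(ad a_ℤ) η`, which on `a_ℤ` exhaust `(ad a) η`: `η` pairs two
eigenvectors of `ad h` to zero unless their eigenvalues add up to `1`, so the non-integral part of
`a` contributes nothing. Hence these directions together with `V` span `a_ℤ*`. If `q` vanished on
`η + V`, all its derivatives along `V` would vanish at `η`, and the eigenvector equation trades a
derivative in a direction `(ad x) η` for derivatives of lower order; so every derivative of `q`
vanishes at `η` and `q = 0` by Taylor's formula. Invariants are semi-invariants of weight zero.
-/

theorem List.countP_set_le {α : Type*} (p : α → Bool) (l : List α) (i : ℕ) (a : α) :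
    (l.set i a).countP p ≤ l.countP p + 1 := by
  rcases lt_or_ge i l.length with hi | hi
  · rw [List.countP_set hi]
    split_ifs <;> omega
  · rw [List.set_eq_of_length_le hi]
    omega

namespace MvPolynomial

open Matrix

variable {k σ : Type*}

section CommRing

variable [CommRing k]

noncomputable def dirDeriv (d : σ → k) :
    Derivation k (MvPolynomial σ k) (MvPolynomial σ k) :=
  mkDerivation k fun i => C (d i)

@[simp]
theorem dirDeriv_X (d : σ → k) (i : σ) : dirDeriv d (X i) = C (d i) :=
  mkDerivation_X _ _ _

theorem dirDeriv_add (d e : σ → k) : dirDeriv (d + e) = dirDeriv d + dirDeriv e :=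
  derivation_ext fun i => by simp

theorem dirDeriv_single [DecidableEq σ] (i : σ) : dirDeriv (Pi.single i (1 : k)) = pderiv i := by
  rw [pderiv_def, dirDeriv]
  congr 1
  ext j : 1
  rcases eq_or_ne j i with rfl | hj <;> simp [*]

theorem dirDeriv_comm (d e : σ → k) (p : MvPolynomial σ k) :
    dirDeriv d (dirDeriv e p) = dirDeriv e (dirDeriv d p) := by
  have hcomm : ⁅dirDeriv d, dirDeriv e⁆ = 0 := derivation_ext fun i => by
    simp [Derivation.commutator_apply]
  simpa [Derivation.commutator_apply, sub_eq_zero] using congr($hcomm p)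

/-- The derivation of the linear vector field `x ↦ A x`. -/
noncomputable def linDeriv [Fintype σ] (A : Matrix σ σ k) :
    Derivation k (MvPolynomial σ k) (MvPolynomial σ k) :=
  mkDerivation k fun i => ∑ j, A i j • X j

@[simp]
theorem linDeriv_X [Fintype σ] (A : Matrix σ σ k) (i : σ) :
    linDeriv A (X i) = ∑ j, A i j • X j :=
  mkDerivation_X _ _ _

theorem commutator_dirDeriv_linDeriv [Fintype σ] (d : σ → k) (A : Matrix σ σ k) :
    ⁅dirDeriv d, linDeriv A⁆ = dirDeriv (A *ᵥ d) :=
  derivation_ext fun i => by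
    simp [Derivation.commutator_apply, Matrix.mulVec, dotProduct, smul_eq_C_mul]

theorem eval_derivation_eq_of_eval_X_eq (c : σ → k)
    {D₁ D₂ : Derivation k (MvPolynomial σ k) (MvPolynomial σ k)}
    (h : ∀ i, eval c (D₁ (X i)) = eval c (D₂ (X i))) (p : MvPolynomial σ k) :
    eval c (D₁ p) = eval c (D₂ p) := by
  induction p using MvPolynomial.induction_on with
  | C a => rw [← algebraMap_eq, D₁.map_algebraMap, D₂.map_algebraMap]
  | add p q hp hq => simp only [map_add, hp, hq]
  | mul_X p i hp => simp only [Derivation.leibniz, smul_eq_mul, map_add, map_mul, hp, h i]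

theorem eval_dirDeriv_mulVec [Fintype σ] (A : Matrix σ σ k) (c : σ → k) (p : MvPolynomial σ k) :
    eval c (dirDeriv (A *ᵥ c) p) = eval c (linDeriv A p) :=
  eval_derivation_eq_of_eval_X_eq c (fun i => by simp [Matrix.mulVec, dotProduct, smul_eval]) p

noncomputable def iterDirDeriv (l : List (σ → k)) (p : MvPolynomial σ k) : MvPolynomial σ k :=
  l.foldr (fun d r => dirDeriv d r) p

@[simp]
theorem iterDirDeriv_nil (p : MvPolynomial σ k) : iterDirDeriv [] p = p := rfl

@[simp]
theorem iterDirDeriv_cons (d : σ → k) (l : List (σ → k)) (p : MvPolynomial σ k) :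
    iterDirDeriv (d :: l) p = dirDeriv d (iterDirDeriv l p) := rfl

theorem iterDirDeriv_append (l₁ l₂ : List (σ → k)) (p : MvPolynomial σ k) :
    iterDirDeriv (l₁ ++ l₂) p = iterDirDeriv l₁ (iterDirDeriv l₂ p) :=
  List.foldr_append

theorem iterDirDeriv_smul (l : List (σ → k)) (a : k) (p : MvPolynomial σ k) :
    iterDirDeriv l (a • p) = a • iterDirDeriv l p := by
  induction l with
  | nil => rfl
  | cons d l ih => simp [ih]

theorem iterDirDeriv_perm {l₁ l₂ : List (σ → k)} (h : l₁.Perm l₂) (p : MvPolynomial σ k) :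
    iterDirDeriv l₁ p = iterDirDeriv l₂ p := by
  induction h with
  | nil => rfl
  | cons d _ ih => simp [ih]
  | swap d e l => simp [dirDeriv_comm]
  | trans _ _ ih₁ ih₂ => rw [ih₁, ih₂]

theorem linDeriv_iterDirDeriv [Fintype σ] (A : Matrix σ σ k) (l : List (σ → k))
    (p : MvPolynomial σ k) :
    linDeriv A (iterDirDeriv l p) = iterDirDeriv l (linDeriv A p)
      - ∑ j : Fin l.length, iterDirDeriv (l.set j (A *ᵥ l[j])) p := by
  induction l with
  | nil => simp
  | cons d l ih =>
    have hd := congr($(commutator_dirDeriv_linDeriv d A) (iterDirDeriv l p))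
    rw [Derivation.commutator_apply] at hd
    rw [iterDirDeriv_cons, eq_sub_of_add_eq (sub_eq_iff_eq_add'.mp hd).symm, ih]
    simp only [map_sub, map_sum, List.length_cons, Fin.sum_univ_succ, Fin.getElem_fin,
      Fin.val_zero, Fin.val_succ, List.set_cons_zero, List.set_cons_succ, List.getElem_cons_zero,
      List.getElem_cons_succ, iterDirDeriv_cons]
    abel

/-- The induction is on the length of `l` plus the number of its entries outside `W`: an entry
`d = A c₀ + w` splits into `w ∈ W`, which lowers that count, and `A c₀`, which at `c₀` acts like
`linDeriv A` and so, by `linDeriv_iterDirDeriv`, shortens the list. -/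
theorem eval_iterDirDeriv_eq_zero_of_transversal [Fintype σ] {c₀ : σ → k}
    {q : MvPolynomial σ k} {W : Submodule k (σ → k)}
    (hdec : ∀ d, ∃ (A : Matrix σ σ k) (μ : k), d - A *ᵥ c₀ ∈ W ∧ linDeriv A q = μ • q)
    (hW : ∀ l : List (σ → k), (∀ e ∈ l, e ∈ W) → eval c₀ (iterDirDeriv l q) = 0)
    (l : List (σ → k)) : eval c₀ (iterDirDeriv l q) = 0 := by
  classical
  induction hN : l.length + l.countP (· ∉ W) using Nat.strong_induction_on generalizing l with
  | _ N ih =>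
  by_cases hlW : ∀ e ∈ l, e ∈ W
  · exact hW l hlW
  obtain ⟨d, hdl, hdW⟩ : ∃ d ∈ l, d ∉ W := by simpa using hlW
  obtain ⟨A, μ, hdA, hA⟩ := hdec d
  obtain ⟨l', hperm⟩ : ∃ l', l.Perm (d :: l') := ⟨_, List.perm_cons_erase hdl⟩
  have hN' : N = l'.length + l'.countP (· ∉ W) + 2 := by
    rw [← hN, hperm.length_eq, hperm.countP_eq, List.countP_cons, if_pos (decide_eq_true hdW),
      List.length_cons]
    omega
  have ih' (m : List (σ → k)) (hm : m.length + m.countP (· ∉ W) < N) :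
      eval c₀ (iterDirDeriv m q) = 0 := ih _ hm m rfl
  have hsplit : dirDeriv d = dirDeriv (A *ᵥ c₀) + dirDeriv (d - A *ᵥ c₀) := by
    rw [← dirDeriv_add, add_sub_cancel]
  rw [iterDirDeriv_perm hperm, iterDirDeriv_cons, hsplit, Derivation.add_apply, map_add,
    eval_dirDeriv_mulVec, linDeriv_iterDirDeriv, hA, iterDirDeriv_smul, map_sub, map_sum,
    smul_eval, ih' l' (by omega), mul_zero, zero_sub,
    Finset.sum_eq_zero fun j _ => ih' _ ?_, neg_zero, zero_add, ← iterDirDeriv_cons]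
  · refine ih' _ ?_
    rw [List.length_cons, List.countP_cons, if_neg (by simpa using hdA)]
    omega
  · have := List.countP_set_le (· ∉ W) l' j (A *ᵥ l'[j])
    rw [List.length_set]
    omega

theorem totalDegree_pderiv_le {p : MvPolynomial σ k} {D : ℕ} (hp : p.totalDegree ≤ D + 1)
    (i : σ) : (pderiv i p).totalDegree ≤ D := by
  classical
  refine Finset.sup_le fun m hm => ?_
  have hmem : m + Finsupp.single i 1 ∈ p.support := by
    rw [mem_support_iff, coeff_pderiv] at hm
    exact mem_support_iff.mpr (left_ne_zero_of_mul hm)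
  have := (le_totalDegree hmem).trans hp
  rw [Finsupp.sum_add_index' (fun _ => rfl) (fun _ _ _ => rfl),
    Finsupp.sum_single_index rfl] at this
  omega

open Polynomial in
noncomputable def lineRestrict (y e : σ → k) : MvPolynomial σ k →ₐ[k] k[X] :=
  aeval fun i => Polynomial.C (y i) + Polynomial.C (e i) * Polynomial.X

theorem eval_lineRestrict (y e : σ → k) (p : MvPolynomial σ k) (t : k) :
    (lineRestrict y e p).eval t = eval (y + t • e) p := by
  rw [← Polynomial.coe_aeval_eq_eval, lineRestrict, ← AlgHom.comp_apply, comp_aeval]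
  have hpoint : (fun i => Polynomial.aeval t (Polynomial.C (y i) + Polynomial.C (e i) *
      Polynomial.X)) = y + t • e := by
    ext i
    simp only [Polynomial.coe_aeval_eq_eval, Polynomial.eval_add, Polynomial.eval_C,
      Polynomial.eval_mul, Polynomial.eval_X, Pi.add_apply, Pi.smul_apply, smul_eq_mul, mul_comm]
  rw [hpoint]
  rfl

theorem derivative_lineRestrict (y e : σ → k) (p : MvPolynomial σ k) :
    Polynomial.derivative (lineRestrict y e p) = lineRestrict y e (dirDeriv e p) := by
  induction p using MvPolynomial.induction_on with
  | C a => simp [lineRestrict]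
  | add p q hp hq => simp only [map_add, hp, hq]
  | mul_X p i hp =>
    simp only [lineRestrict, map_mul, map_add, aeval_X, algHom_C, Polynomial.algebraMap_eq,
      Polynomial.derivative_mul, Polynomial.derivative_C, Polynomial.derivative_X, zero_mul,
      mul_one, zero_add, Derivation.leibniz, dirDeriv_X, smul_eq_mul] at hp ⊢
    rw [hp]
    ring

end CommRing

section CharZero

variable [Field k] [CharZero k]

theorem eq_C_of_forall_pderiv_eq_zero {p : MvPolynomial σ k} (h : ∀ i, pderiv i p = 0) :
    p = C (coeff 0 p) := by
  classical
  ext m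
  rcases eq_or_ne m 0 with rfl | hm
  · simp
  obtain ⟨i, hi⟩ : ∃ i, m i ≠ 0 := by simpa [Finsupp.ext_iff] using hm
  have hle : Finsupp.single i 1 ≤ m := by
    simpa [Finsupp.single_le_iff] using Nat.one_le_iff_ne_zero.mpr hi
  have hcoeff := coeff_pderiv (i := i) p (m - Finsupp.single i 1)
  rw [h i, tsub_add_cancel_of_le hle, coeff_zero, eq_comm, mul_eq_zero] at hcoeff
  rw [coeff_C, if_neg (Ne.symm hm)]
  exact hcoeff.resolve_right (Nat.cast_add_one_ne_zero _)

theorem eq_zero_of_forall_eval_iterDirDeriv_eq_zero (c : σ → k) {p : MvPolynomial σ k}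
    (h : ∀ l, eval c (iterDirDeriv l p) = 0) : p = 0 := by
  classical
  suffices ∀ D (p : MvPolynomial σ k), p.totalDegree ≤ D →
      (∀ l, eval c (iterDirDeriv l p) = 0) → p = 0 from this _ p le_rfl h
  intro D
  induction D with
  | zero =>
    intro p hp h
    rw [totalDegree_eq_zero_iff_eq_C.mp (Nat.le_zero.mp hp)] at h ⊢
    simpa using h []
  | succ D ih =>
    intro p hp h
    have hpderiv (i : σ) : pderiv i p = 0 := ih _ (totalDegree_pderiv_le hp i) fun l => by
      rw [← dirDeriv_single]
      have hl := h (l ++ [Pi.single i 1])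
      rwa [iterDirDeriv_append, iterDirDeriv_cons, iterDirDeriv_nil] at hl
    rw [eq_C_of_forall_pderiv_eq_zero hpderiv] at h ⊢
    simpa using h []

theorem dirDeriv_vanishes_on_affine {c : σ → k} {W : Submodule k (σ → k)}
    {p : MvPolynomial σ k} (hp : ∀ w ∈ W, eval (c + w) p = 0) {e : σ → k} (he : e ∈ W) :
    ∀ w ∈ W, eval (c + w) (dirDeriv e p) = 0 := by
  intro w hw
  have hline : lineRestrict (c + w) e p = 0 := Polynomial.funext fun t => by
    rw [eval_lineRestrict, Polynomial.eval_zero, add_assoc]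
    exact hp _ (W.add_mem hw (W.smul_mem t he))
  have h0 := congr(Polynomial.eval 0 (Polynomial.derivative $hline))
  rwa [derivative_lineRestrict, eval_lineRestrict, zero_smul, add_zero, map_zero,
    Polynomial.eval_zero] at h0

theorem eval_iterDirDeriv_eq_zero_of_vanishes_on_affine {c : σ → k} {W : Submodule k (σ → k)}
    {p : MvPolynomial σ k} (hp : ∀ w ∈ W, eval (c + w) p = 0) {l : List (σ → k)}
    (hl : ∀ e ∈ l, e ∈ W) : eval c (iterDirDeriv l p) = 0 := by
  suffices ∀ w ∈ W, eval (c + w) (iterDirDeriv l p) = 0 by simpa using this 0 W.zero_mem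
  induction l with
  | nil => exact hp
  | cons e l ih =>
    simp only [List.mem_cons, forall_eq_or_imp] at hl
    exact dirDeriv_vanishes_on_affine (ih hl.2) hl.1

theorem eq_zero_of_vanishes_on_transversal_affine [Fintype σ] {c₀ : σ → k}
    {q : MvPolynomial σ k} {W : Submodule k (σ → k)}
    (hdec : ∀ d, ∃ (A : Matrix σ σ k) (μ : k), d - A *ᵥ c₀ ∈ W ∧ linDeriv A q = μ • q)
    (hq : ∀ w ∈ W, eval (c₀ + w) q = 0) : q = 0 :=
  eq_zero_of_forall_eval_iterDirDeriv_eq_zero c₀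
    (eval_iterDirDeriv_eq_zero_of_transversal hdec fun _ =>
      eval_iterDirDeriv_eq_zero_of_vanishes_on_affine hq)

end CharZero

end MvPolynomial

section Coadjoint

open Matrix

variable {k L : Type*} [Field k] [LieRing L] [LieAlgebra k L]

theorem apply_lie_eq_zero_of_add_ne_one {h : L} {η : Dual k L} (hη : ∀ y, η ⁅h, y⁆ = η y)
    {y z : L} {μ ν : k} (hy : ⁅h, y⁆ = μ • y) (hz : ⁅h, z⁆ = ν • z) (hμν : μ + ν ≠ 1) :
    η ⁅y, z⁆ = 0 := by
  have heig := hη ⁅y, z⁆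
  rw [leibniz_lie, hy, hz, smul_lie, lie_smul, ← add_smul, map_smul, smul_eq_mul] at heig
  have hzero : (μ + ν - 1) * η ⁅y, z⁆ = 0 := by linear_combination heig
  exact (mul_eq_zero.mp hzero).resolve_left (sub_ne_zero.mpr hμν)

/-- Eigenvectors of `ad h` with non-integral eigenvalue pair to zero with `a_ℤ` under `η ∘ ad`
(by `apply_lie_eq_zero_of_add_ne_one`), so only the `a_ℤ`-component of `x'` matters. -/
theorem exists_mem_intPart_apply_lie_eq [IsAlgClosed k] [CharZero k] [Module.Finite k L]
    {h : L} {η : Dual k L} (hss : ⨆ μ : k, (LieAlgebra.ad k L h).eigenspace μ = ⊤)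
    (hη : ∀ y, η ⁅h, y⁆ = η y) (x' : L) :
    ∃ x ∈ intPart k L h, ∀ z ∈ intPart k L h, η ⁅x', z⁆ = η ⁅x, z⁆ := by
  set I := intPart k L h
  let Φ : L →ₗ[k] Dual k I := I.subtype.dualMap ∘ₗ coadMap k L η
  have hΦ : ⊤ ≤ (I.map Φ).comap Φ := hss ▸ iSup_le fun μ => by
    by_cases hμ : ∃ n : ℤ, (n : k) = μ
    · obtain ⟨n, rfl⟩ := hμ
      exact (le_iSup (fun n : ℤ => (LieAlgebra.ad k L h).eigenspace (n : k)) n).trans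
        (Submodule.le_comap_map Φ I)
    refine le_trans (fun y hy => ?_) (LinearMap.ker_le_comap Φ)
    have hker : I ≤ LinearMap.ker (η ∘ₗ LieAlgebra.ad k L y) := iSup_le fun n z hz =>
      apply_lie_eq_zero_of_add_ne_one hη (Module.End.mem_eigenspace_iff.mp hy)
        (Module.End.mem_eigenspace_iff.mp hz) fun h1 =>
          hμ ⟨1 - n, by push_cast; linear_combination -h1⟩
    ext ⟨z, hz⟩
    simpa [Φ, coadMap] using hker hz
  obtain ⟨x, hx, hΦx⟩ := hΦ (Submodule.mem_top (x := x'))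
  refine ⟨x, hx, fun z hz => ?_⟩
  simpa [Φ, coadMap] using (LinearMap.congr_fun hΦx ⟨z, hz⟩).symm

variable {n : ℕ}

noncomputable def restrictCoords {A : LieSubalgebra k L} (b : Basis (Fin n) k A) :
    Dual k L →ₗ[k] Fin n → k where
  toFun ξ i := ξ (b i)
  map_add' _ _ := rfl
  map_smul' _ _ := rfl

theorem secEval_eq_eval_restrictCoords {A : LieSubalgebra k L} (b : Basis (Fin n) k A)
    (ξ : Dual k L) (p : MvPolynomial (Fin n) k) :
    secEval b ξ p = MvPolynomial.eval (restrictCoords b ξ) p := rfl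

theorem restrictCoords_surjective {A : LieSubalgebra k L} (b : Basis (Fin n) k A) :
    Function.Surjective (restrictCoords b) := fun d => by
  obtain ⟨ζ, hζ⟩ := LinearMap.dualMap_surjective_of_injective A.toSubmodule.injective_subtype
    (b.constr k d)
  exact ⟨ζ, funext fun i => by simpa [restrictCoords] using LinearMap.congr_fun hζ (b i)⟩

theorem lieDer_eq_linDeriv (b : Basis (Fin n) k L) (x : L) :
    lieDer b x = MvPolynomial.linDeriv (LinearMap.toMatrix b b (LieAlgebra.ad k L x))ᵀ := by
  simp [lieDer, MvPolynomial.linDeriv, LinearMap.toMatrix_apply]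

theorem toMatrix_ad_transpose_mulVec (b : Basis (Fin n) k L) (x : L) (f : Dual k L) :
    (LinearMap.toMatrix b b (LieAlgebra.ad k L x))ᵀ *ᵥ (fun j => f (b j)) =
      fun i => f ⁅x, b i⁆ := by
  ext i
  simp only [Matrix.mulVec, dotProduct, Matrix.transpose_apply, LinearMap.toMatrix_apply,
    LieAlgebra.ad_apply]
  conv_rhs => rw [← b.sum_repr ⁅x, b i⁆]
  simp only [map_sum, map_smul, smul_eq_mul]

theorem isSemiInvariant_of_mem_lieInvariants (b : Basis (Fin n) k L) {p : MvPolynomial (Fin n) k}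
    (hp : p ∈ lieInvariants b) (hp0 : p ≠ 0) : IsSemiInvariant b p :=
  ⟨0, hp0, fun _ _ => rfl, fun x => by simpa using hp x⟩

theorem exists_sub_mulVec_mem_map_restrictCoords [IsAlgClosed k] [CharZero k] [Module.Finite k L]
    {h : L} {η : Dual k L} (hss : ⨆ μ : k, (LieAlgebra.ad k L h).eigenspace μ = ⊤)
    (hη : ∀ y, η ⁅h, y⁆ = η y) {V : Submodule k (Dual k L)}
    (hV : Codisjoint (coadOrbit k L η) V) {aZ : LieSubalgebra k L}
    (haZ : aZ.toSubmodule = intPart k L h) (bz : Basis (Fin n) k aZ) (d : Fin n → k) :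
    ∃ x : aZ, d - (LinearMap.toMatrix bz bz (LieAlgebra.ad k aZ x))ᵀ *ᵥ restrictCoords bz η ∈
      V.map (restrictCoords bz) := by
  obtain ⟨ζ, rfl⟩ := restrictCoords_surjective bz d
  obtain ⟨_, ⟨x', rfl⟩, v, hv, hsum⟩ :=
    Submodule.mem_sup.mp (hV.eq_top ▸ Submodule.mem_top : ζ ∈ coadOrbit k L η ⊔ V)
  obtain ⟨x, hx, hxx'⟩ := exists_mem_intPart_apply_lie_eq hss hη x'
  have hmem (y : L) : y ∈ aZ ↔ y ∈ intPart k L h := SetLike.ext_iff.mp haZ y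
  refine ⟨-⟨x, (hmem x).mpr hx⟩, v, hv, ?_⟩
  have hη' : restrictCoords bz η = fun j => (η ∘ₗ aZ.toSubmodule.subtype) (bz j) := rfl
  rw [hη', toMatrix_ad_transpose_mulVec, ← hsum]
  ext i
  change v (bz i) = (-η ⁅x', (bz i : L)⁆ + v (bz i)) - η ⁅-x, (bz i : L)⁆
  rw [hxx' _ ((hmem _).mp (bz i).2), neg_lie, map_neg]
  ring

end Coadjoint

theorem semiInvariant_psi_ne_zero_general
    (k : Type*) [Field k] [IsAlgClosed k] [CharZero k]
    (L : Type*) [LieRing L] [LieAlgebra k L] [Module.Finite k L]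
    (h : L) (η : Module.Dual k L) (hpair : IsAdaptedPair k L h η)
    (V : Submodule k (Module.Dual k L))
    (hVc : IsCompl (coadOrbit k L η) V)
    (aZ : LieSubalgebra k L) (haZ : aZ.toSubmodule = intPart k L h)
    {nz : ℕ} (bz : Basis (Fin nz) k aZ) :
    (∀ q : MvPolynomial (Fin nz) k, IsSemiInvariant bz q →
        ∃ v ∈ V, secEval bz (η + v) q ≠ 0) ∧
      ∀ p₁ ∈ lieInvariants bz, ∀ p₂ ∈ lieInvariants bz,
        (∀ v ∈ V, secEval bz (η + v) p₁ = secEval bz (η + v) p₂) → p₁ = p₂ := by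
  have hnonvanishing (q : MvPolynomial (Fin nz) k) (hq : IsSemiInvariant bz q) :
      ∃ v ∈ V, secEval bz (η + v) q ≠ 0 := by
    obtain ⟨lam, hq0, -, hlam⟩ := hq
    by_contra! hvan
    refine hq0 (MvPolynomial.eq_zero_of_vanishes_on_transversal_affine
      (c₀ := restrictCoords bz η) (W := V.map (restrictCoords bz)) (fun d => ?_) ?_)
    · obtain ⟨x, hx⟩ := exists_sub_mulVec_mem_map_restrictCoords hpair.semisimple hpair.eigen
        hVc.codisjoint haZ bz d
      exact ⟨_, lam x, hx, by rw [← lieDer_eq_linDeriv]; exact hlam x⟩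
    · rintro _ ⟨v, hv, rfl⟩
      rw [← map_add]
      exact hvan v hv
  refine ⟨hnonvanishing, fun p₁ hp₁ p₂ hp₂ heq => by_contra fun hne => ?_⟩
  obtain ⟨v, hv, hne'⟩ := hnonvanishing _ (isSemiInvariant_of_mem_lieInvariants bz
    (sub_mem hp₁ hp₂) (sub_ne_zero.mpr hne))
  exact hne' (by rw [secEval_eq_eval_restrictCoords, map_sub]; exact sub_eq_zero.mpr (heq v hv))

/-- With `ψ` the restriction of polynomial functions on `a_ℤ*` to the linear
subvariety `η + V`, every nonzero semi-invariant of `S(a_ℤ)` has nonzero image under `ψ`;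
consequently `ψ` is injective on the invariant algebra `Y(a_ℤ)`. -/
theorem semiInvariant_psi_ne_zero
    (k : Type*) [Field k] [IsAlgClosed k] [CharZero k]
    (L : Type*) [LieRing L] [LieAlgebra k L] [Module.Finite k L]
    (hreg : IsRegularLieAlgebra k L)
    (h : L) (η : Module.Dual k L) (hpair : IsAdaptedPair k L h η)
    (V : Submodule k (Module.Dual k L))
    (hVc : IsCompl (coadOrbit k L η) V)
    (hVh : ∀ ξ ∈ V, coadEnd k L h ξ ∈ V)
    (aZ : LieSubalgebra k L) (haZ : aZ.toSubmodule = intPart k L h)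
    {nz : ℕ} (bz : Basis (Fin nz) k aZ) :
    (∀ q : MvPolynomial (Fin nz) k, IsSemiInvariant bz q →
        ∃ v ∈ V, secEval bz (η + v) q ≠ 0) ∧
      ∀ p₁ ∈ lieInvariants bz, ∀ p₂ ∈ lieInvariants bz,
        (∀ v ∈ V, secEval bz (η + v) p₁ = secEval bz (η + v) p₂) → p₁ = p₂ :=
  semiInvariant_psi_ne_zero_general k L h η hpair V hVc aZ haZ bz
end

section
/- Let a be a regular finite-dimensional algebraic Lie algebra over k admitting an adapted pair (h, η), and let n = Σ_{i≠0} a_i^η, where a_i^η = a_i ∩ a^η; then n is a nilpotent subalgebra acting nilpotently on a. For every a ∈ n there exists x ∈ n such that (exp ad x)(h) − h = a. -/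
open Module

/-! The stabiliser `a^η` of a regular `η` is commutative (Duflo–Vergne): if `ν ⁅u, v⁆ ≠ 0` for
some `u, v ∈ a^η`, the form `(η + tν)⁅·, ·⁆` is, for generic `t`, nondegenerate on a complement
of `a^η` enlarged by `u` and `v`, so the stabiliser of `η + tν` would have dimension at most
`ℓ(a) - 2`. Hence `n ⊆ a^η` is commutative, and `ad n` consists of commuting nilpotents: `ad h`
has finitely many eigenvalues and `ad x`, for `x` of nonzero `ad h`-weight, shifts them. Finally
`ad h` is invertible on `n`, so `a = ⁅-x, h⁆` for some `x ∈ n`, and `(ad x)² h = ⁅x, a⁆ = 0`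
truncates `exp ad (-x) h` to `h + a`. -/

section Gram

open Polynomial

variable {k : Type*} [Field k] {L : Type*} [LieRing L] [LieAlgebra k L]
variable {ι κ : Type*} [Fintype ι] [Fintype κ] [DecidableEq ι] [DecidableEq κ]

def lieGram (ξ : Module.Dual k L) (e : ι → L) : Matrix ι ι k :=
  Matrix.of fun i j => ξ ⁅e i, e j⁆

theorem apply_lie_eq_zero_of_mem_coadStab {η : Module.Dual k L} {z : L}
    (hz : z ∈ coadStab k L η) (y : L) : η ⁅y, z⁆ = 0 := by
  rw [← lie_skew, map_neg, hz y, neg_zero]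

theorem finrank_coadStab_add_card_le [Module.Finite k L] {ξ : Module.Dual k L} {e : ι → L}
    (he : (lieGram ξ e).det ≠ 0) :
    finrank k (coadStab k L ξ) + Fintype.card ι ≤ finrank k L := by
  let Φ : L →ₗ[k] ι → k :=
    LinearMap.pi fun j => ξ ∘ₗ (LieAlgebra.ad k L : L →ₗ[k] Module.End k L).flip (e j)
  have hker : coadStab k L ξ ≤ LinearMap.ker Φ := fun x hx => funext fun j => hx (e j)
  have hrange : Fintype.card ι ≤ finrank k (LinearMap.range Φ) := by
    have hrows : LinearIndependent k fun i => Φ (e i) :=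
      Matrix.linearIndependent_rows_of_det_ne_zero he
    rw [← finrank_span_eq_card hrows]
    exact Submodule.finrank_mono <| Submodule.span_le.mpr <| Set.range_subset_iff.mpr
      fun i => LinearMap.mem_range_self Φ (e i)
  have := Submodule.finrank_mono hker
  have := LinearMap.finrank_range_add_finrank_ker Φ
  omega

theorem det_lieGram_ne_zero_of_isCompl {η : Module.Dual k L} {W : Submodule k L}
    (hW : IsCompl (coadStab k L η) W) (w : Basis ι k W) :
    (lieGram η fun i => (w i : L)).det ≠ 0 := by
  intro hdet
  obtain ⟨c, hc0, hc⟩ := Matrix.exists_vecMul_eq_zero_iff.mpr hdet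
  set x := ∑ i, c i • (w i : L)
  have hxW : x ∈ W := W.sum_mem fun i _ => W.smul_mem _ (w i).2
  have hxK : x ∈ coadStab k L η := by
    have hW0 : η ∘ₗ LieAlgebra.ad k L x ∘ₗ W.subtype = 0 := w.ext fun j => by
      simpa [x, lieGram, Matrix.vecMul, dotProduct, sum_lie] using congrFun hc j
    intro y
    obtain ⟨yK, hyK, yW, hyW, rfl⟩ := Submodule.mem_sup.mp (hW.sup_eq_top ▸ Submodule.mem_top :
      y ∈ coadStab k L η ⊔ W)
    rw [lie_add, map_add, apply_lie_eq_zero_of_mem_coadStab hyK, zero_add]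
    exact LinearMap.congr_fun hW0 ⟨yW, hyW⟩
  have hx0 : x = 0 := Submodule.disjoint_def.mp hW.disjoint x hxK hxW
  exact hc0 <| funext <|
    Fintype.linearIndependent_iff.mp (w.linearIndependent.map' W.subtype W.ker_subtype) c hx0

theorem Matrix.det_map_eval (M : Matrix ι ι k[X]) (t : k) :
    (M.map (eval t)).det = eval t M.det := by
  rw [← coe_evalRingHom, ← RingHom.mapMatrix_apply, ← RingHom.map_det]

theorem exists_det_lieGram_add_smul_ne_zero [Infinite k] {η ν : Module.Dual k L} {w : ι → L}
    {z : κ → L} (hw : (lieGram η w).det ≠ 0) (hz : ∀ b, z b ∈ coadStab k L η)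
    (hν : (lieGram ν z).det ≠ 0) : ∃ t : k, (lieGram (η + t • ν) (Sum.elim w z)).det ≠ 0 := by
  set e := Sum.elim w z
  let P : Matrix (ι ⊕ κ) (ι ⊕ κ) k[X] :=
    Matrix.of fun i j => C (η ⁅e i, e j⁆) + X * C (ν ⁅e i, e j⁆)
  -- the `κ`-rows of `P` are divisible by `X`, since `η` vanishes on them
  let N : Matrix (ι ⊕ κ) (ι ⊕ κ) k[X] :=
    Matrix.of fun i j => Sum.elim (fun _ => P i j) (fun _ => C (ν ⁅e i, e j⁆)) i
  have hPN : P = Matrix.diagonal (Sum.elim 1 fun _ => X) * N := by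
    ext (a | b) j <;> simp [P, N, e, Matrix.diagonal_mul, hz _ _]
  have hN0 : N.map (eval 0) =
      Matrix.fromBlocks (lieGram η w) 0 (Matrix.of fun b a => ν ⁅z b, w a⁆) (lieGram ν z) := by
    ext (a | b) (a' | b') <;>
      simp [N, P, e, lieGram, apply_lie_eq_zero_of_mem_coadStab (hz _)]
  have hN : N.det ≠ 0 := fun h0 => by
    simpa [← Matrix.det_map_eval, hN0, Matrix.det_fromBlocks_zero₁₂, hw, hν] using
      congrArg (eval 0) h0
  have hP : P.det ≠ 0 := by
    rw [hPN, Matrix.det_mul, Matrix.det_diagonal]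
    exact mul_ne_zero (Finset.prod_ne_zero_iff.mpr fun i _ => by cases i <;> simp) hN
  obtain ⟨t, ht⟩ : ∃ t, eval t P.det ≠ 0 := by
    by_contra! h
    exact hP (zero_of_eval_zero _ h)
  refine ⟨t, ?_⟩
  convert ht using 1
  rw [← Matrix.det_map_eval]
  congr 1
  ext i j
  simp only [P, lieGram, Matrix.map_apply, Matrix.of_apply, eval_add, eval_mul, eval_C, eval_X,
    LinearMap.add_apply, LinearMap.smul_apply, smul_eq_mul]

end Gram

theorem lie_eq_zero_of_mem_coadStab {k : Type*} [Field k] [Infinite k] {L : Type*} [LieRing L]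
    [LieAlgebra k L] [Module.Finite k L] {η : Module.Dual k L} (hη : IsRegularCovector k L η)
    {u v : L} (hu : u ∈ coadStab k L η) (hv : v ∈ coadStab k L η) : ⁅u, v⁆ = 0 := by
  by_contra huv
  obtain ⟨ν, hν⟩ : ∃ ν : Module.Dual k L, ν ⁅u, v⁆ ≠ 0 := by
    by_contra! h
    exact huv ((Module.forall_dual_apply_eq_zero_iff k _).mp h)
  obtain ⟨W, hW⟩ := Submodule.exists_isCompl (coadStab k L η)
  have hνuv : (lieGram ν ![u, v]).det ≠ 0 := by
    have hvu : ν ⁅v, u⁆ = -ν ⁅u, v⁆ := by rw [← lie_skew u v, map_neg, neg_neg]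
    rw [Matrix.det_fin_two]
    simp only [lieGram, Matrix.of_apply, Matrix.cons_val_zero, Matrix.cons_val_one, lie_self,
      map_zero, hvu]
    simpa using hν
  obtain ⟨t, ht⟩ := exists_det_lieGram_add_smul_ne_zero
    (det_lieGram_ne_zero_of_isCompl hW (Module.finBasis k W)) (Fin.forall_fin_two.mpr ⟨hu, hv⟩)
    hνuv
  have hle := finrank_coadStab_add_card_le ht
  have hmin : lieIndex k L ≤ finrank k (coadStab k L (η + t • ν)) :=
    ciInf_le' (fun ξ => finrank k (coadStab k L ξ)) _
  have := Submodule.finrank_add_eq_of_isCompl hW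
  rw [Fintype.card_sum, Fintype.card_fin, Fintype.card_fin] at hle
  rw [IsRegularCovector] at hη
  omega

section Eigen

open LieAlgebra

variable {k : Type*} [Field k] {L : Type*} [LieRing L] [LieAlgebra k L]

theorem lie_mem_eigenspace_ad {h x y : L} {μ ν : k} (hx : x ∈ (ad k L h).eigenspace μ)
    (hy : y ∈ (ad k L h).eigenspace ν) : ⁅x, y⁆ ∈ (ad k L h).eigenspace (μ + ν) := by
  rw [Module.End.mem_eigenspace_iff, ad_apply] at hx hy ⊢
  rw [leibniz_lie, hx, hy, smul_lie, lie_smul, add_smul]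

theorem ad_pow_apply_mem_eigenspace {h x y : L} {μ ν : k} (hx : x ∈ (ad k L h).eigenspace μ)
    (hy : y ∈ (ad k L h).eigenspace ν) (n : ℕ) :
    (ad k L x ^ n) y ∈ (ad k L h).eigenspace (n * μ + ν) := by
  induction n with
  | zero => simpa using hy
  | succ n ih =>
    rw [pow_succ', Module.End.mul_apply, ad_apply, Nat.cast_succ, add_one_mul, add_right_comm,
      add_comm]
    exact lie_mem_eigenspace_ad hx ih

theorem isNilpotent_ad_of_mem_eigenspace [CharZero k] [Module.Finite k L] {h : L}
    (hh : ⨆ μ, (ad k L h).eigenspace μ = ⊤) {μ : k} (hμ : μ ≠ 0) {x : L}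
    (hx : x ∈ (ad k L h).eigenspace μ) : IsNilpotent (ad k L x) := by
  refine Module.End.isNilpotent_iff_of_finite.mpr fun y => ?_
  have hy : y ∈ ⨆ ν, (ad k L h).eigenspace ν := hh ▸ Submodule.mem_top
  induction hy using Submodule.iSup_induction' with
  | mem ν y hy =>
    -- the `n μ + ν` are pairwise distinct, while `ad h` has only finitely many eigenvalues
    have hinj : Function.Injective fun n : ℕ => n * μ + ν := fun m n hmn => by
      simpa [hμ] using hmn
    obtain ⟨_, ⟨n, rfl⟩, hn⟩ :=
      (Set.infinite_range_of_injective hinj).exists_notMem_finite (ad k L h).finite_hasEigenvalue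
    have hbot : (ad k L h).eigenspace (n * μ + ν) = ⊥ := not_not.mp hn
    have hmem := ad_pow_apply_mem_eigenspace hx hy n
    rw [hbot, Submodule.mem_bot] at hmem
    exact ⟨n, hmem⟩
  | zero => exact ⟨0, map_zero _⟩
  | add y₁ y₂ _ _ h₁ h₂ =>
    obtain ⟨n₁, hn₁⟩ := h₁
    obtain ⟨n₂, hn₂⟩ := h₂
    refine ⟨max n₁ n₂, ?_⟩
    rw [map_add, Module.End.pow_map_zero_of_le le_sup_left hn₁,
      Module.End.pow_map_zero_of_le le_sup_right hn₂, add_zero]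

theorem isNilpotent_ad_of_mem_iSup {ι : Sort*} {p : ι → Submodule k L}
    (hcomm : ∀ x ∈ ⨆ i, p i, ∀ y ∈ ⨆ i, p i, ⁅x, y⁆ = 0)
    (hnil : ∀ i, ∀ x ∈ p i, IsNilpotent (ad k L x)) {x : L} (hx : x ∈ ⨆ i, p i) :
    IsNilpotent (ad k L x) := by
  induction hx using Submodule.iSup_induction' with
  | mem i x hx => exact hnil i x hx
  | zero => rw [map_zero]; exact IsNilpotent.zero
  | add x y hx hy hnx hny =>
    rw [map_add]
    refine Commute.isNilpotent_add (LinearMap.ext fun z => ?_) hnx hny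
    simp only [Module.End.mul_apply, ad_apply, leibniz_lie x y z, hcomm x hx y hy, zero_lie,
      zero_add]

end Eigen

theorem Module.End.le_map_iSup_eigenspace_inf {k V : Type*} [Field k] [AddCommGroup V]
    [Module k V] (f : Module.End k V) (K : Submodule k V) :
    ⨆ μ : {μ : k // μ ≠ 0}, f.eigenspace μ ⊓ K ≤
      (⨆ μ : {μ : k // μ ≠ 0}, f.eigenspace μ ⊓ K).map f := by
  refine iSup_le fun μ y hy =>
    ⟨(μ : k)⁻¹ • y, Submodule.mem_iSup_of_mem μ (Submodule.smul_mem _ _ hy), ?_⟩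
  rw [map_smul, Module.End.mem_eigenspace_iff.mp hy.1, smul_smul, inv_mul_cancel₀ μ.2, one_smul]

theorem expAd_apply_of_lie_lie_eq_zero {k : Type*} [Field k] {L : Type*} [LieRing L]
    [LieAlgebra k L] [Module.Finite k L] {x y : L} (hxy : ⁅x, ⁅x, y⁆⁆ = 0) :
    expAd k L x y = y + ⁅x, y⁆ := by
  by_cases hL : finrank k L = 0
  · have := Module.finrank_zero_iff.mp hL
    exact Subsingleton.elim _ _
  obtain ⟨n, hn⟩ := Nat.exists_eq_succ_of_ne_zero hL
  have hvanish : ∀ i, (LieAlgebra.ad k L x ^ (i + 1 + 1)) y = 0 := fun i => by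
    rw [add_assoc, pow_add, Module.End.mul_apply, one_add_one_eq_two, sq, Module.End.mul_apply,
      LieAlgebra.ad_apply, LieAlgebra.ad_apply, hxy, map_zero]
  rw [expAd, hn, LinearMap.sum_apply, Finset.sum_range_succ', Finset.sum_range_succ']
  simp only [LinearMap.smul_apply, hvanish, smul_zero, Finset.sum_const_zero, zero_add]
  simp [add_comm]

theorem exp_of_stabilizer_moves_h_general
    (k : Type*) [Field k] [CharZero k]
    (L : Type*) [LieRing L] [LieAlgebra k L] [Module.Finite k L]
    (h : L) (η : Module.Dual k L) (hpair : IsAdaptedPair k L h η) :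
    ∀ N : Submodule k L,
      N = (⨆ μ : {μ : k // μ ≠ 0},
            (LieAlgebra.ad k L h).eigenspace (μ : k) ⊓ coadStab k L η) →
      (∀ x ∈ N, ∀ y ∈ N, ⁅x, y⁆ ∈ N) ∧
      (∀ x ∈ N, IsNilpotent (LieAlgebra.ad k L x)) ∧
      ∀ a ∈ N, ∃ x ∈ N, expAd k L x h - h = a := by
  intro N hN
  have hNstab : N ≤ coadStab k L η := hN ▸ iSup_le fun _ => inf_le_right
  have hab : ∀ x ∈ N, ∀ y ∈ N, ⁅x, y⁆ = 0 := fun x hx y hy =>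
    lie_eq_zero_of_mem_coadStab hpair.regular (hNstab hx) (hNstab hy)
  refine ⟨fun x hx y hy => hab x hx y hy ▸ N.zero_mem, fun x hx => ?_, fun a ha => ?_⟩
  · subst hN
    exact isNilpotent_ad_of_mem_iSup hab
      (fun μ _ hy => isNilpotent_ad_of_mem_eigenspace hpair.semisimple μ.2 hy.1) hx
  · have hNmap : N ≤ N.map (LieAlgebra.ad k L h) :=
      hN ▸ (LieAlgebra.ad k L h).le_map_iSup_eigenspace_inf (coadStab k L η)
    obtain ⟨x, hx, hxa⟩ := hNmap ha
    have hxh : ⁅-x, h⁆ = a := by rw [neg_lie, lie_skew]; exact hxa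
    refine ⟨-x, N.neg_mem hx, ?_⟩
    rw [expAd_apply_of_lie_lie_eq_zero (by rw [hxh, hab _ (N.neg_mem hx) a ha]), hxh,
      add_sub_cancel_left]

/-- For a regular Lie algebra with adapted pair `(h, η)`, the sum
`n = Σ_{i ≠ 0} a_i^η` of the nonzero `ad h` eigenspace components of the stabiliser `a^η`
is a nilpotent subalgebra acting nilpotently on `a`, and for every `a ∈ n` there is `x ∈ n`
with `(exp ad x)(h) - h = a`. -/
theorem exp_of_stabilizer_moves_h
    (k : Type*) [Field k] [IsAlgClosed k] [CharZero k]
    (L : Type*) [LieRing L] [LieAlgebra k L] [Module.Finite k L]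
    (hreg : IsRegularLieAlgebra k L)
    (h : L) (η : Module.Dual k L) (hpair : IsAdaptedPair k L h η) :
    ∀ N : Submodule k L,
      N = (⨆ μ : {μ : k // μ ≠ 0},
            (LieAlgebra.ad k L h).eigenspace (μ : k) ⊓ coadStab k L η) →
      (∀ x ∈ N, ∀ y ∈ N, ⁅x, y⁆ ∈ N) ∧
      (∀ x ∈ N, IsNilpotent (LieAlgebra.ad k L x)) ∧
      ∀ a ∈ N, ∃ x ∈ N, expAd k L x h - h = a :=
  exp_of_stabilizer_moves_h_general k L h η hpair
end
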